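/- Let G be a finite digraph on n nodes and let 𝒢 be a subgraph of G with n₁ nodes. Then for every integer γ ≥ 1, the cycle removal threshold satisfies T_cr^γ(𝒢) ≤ γ·n + n − n₁ − 1. Concretely: every walk W from i to j visiting a node of 𝒢 admits a walk V from i to j visiting a node of 𝒢, obtained from W by removing cycles, with l(V) ≡ l(W) (mod γ) and l(V) ≤ γ·n + n − n₁ − 1. -/

import Mathlib

open Classical

noncomputable section

namespace MaxPlus

/-- A square matrix over the max-plus semiring `ℝmax = ℝ ∪ {-∞}`,
represented as `WithBot ℝ` (with `⊥ = -∞`, `+` the usual addition). -/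
abbrev MPMat (n : ℕ) := Fin n → Fin n → WithBot ℝ

variable {n : ℕ}

/-- Max-plus matrix multiplication: `(A⊗B)_{ij} = max_k (a_{ik} + b_{kj})`. -/
def mpMul (A B : MPMat n) : MPMat n := fun i j => Finset.univ.sup fun k => A i k + B k j

/-- Max-plus matrix power, with `A^0` the max-plus identity. -/
def mpPow (A : MPMat n) : ℕ → MPMat n
  | 0 => fun i j => if i = j then (0 : WithBot ℝ) else ⊥
  | t + 1 => mpMul A (mpPow A t)

/-- Max-plus matrix-vector product. -/
def mpMulVec (A : MPMat n) (x : Fin n → WithBot ℝ) : Fin n → WithBot ℝ :=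
  fun i => Finset.univ.sup fun k => A i k + x k

/-- A digraph on the node set `{1,…,n}`: a set of vertices together with an
edge relation. -/
structure SubD (n : ℕ) where
  verts : Set (Fin n)
  edge : Fin n → Fin n → Prop

/-- The weighted digraph `𝒟(A)` of a max-plus matrix: all `n` nodes, with an
edge `(i,j)` whenever `a_{ij} ≠ -∞`. -/
def digr (A : MPMat n) : SubD n := ⟨Set.univ, fun i j => A i j ≠ ⊥⟩

/-- `W` (a nonempty list of nodes) is a walk in the digraph `G`. -/
def IsWalkIn (G : SubD n) (W : List (Fin n)) : Prop :=
  W ≠ [] ∧ (∀ v ∈ W, v ∈ G.verts) ∧ W.Chain' G.edge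

/-- The length of a walk: its number of edges (number of nodes minus one). -/
def elen (W : List (Fin n)) : ℕ := W.length - 1

/-- The weight `p(W)` of a walk: sum of the weights of its edges. -/
def walkWeight (A : MPMat n) (W : List (Fin n)) : WithBot ℝ :=
  ((W.zip W.tail).map fun p => A p.1 p.2).sum

/-- `W` is a cycle in `G`: a nonempty closed walk with pairwise distinct
nodes (apart from the repeated endpoint). -/
def IsCycleIn (G : SubD n) (W : List (Fin n)) : Prop :=
  IsWalkIn G W ∧ 2 ≤ W.length ∧ W.head? = W.getLast? ∧ W.dropLast.Nodup

/-- `W` is a path in `G`: a walk with no repeated node. -/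
def IsPathIn (G : SubD n) (W : List (Fin n)) : Prop :=
  IsWalkIn G W ∧ W.Nodup

/-- `v` is reachable from `u` by a (possibly empty) walk in `G`. -/
def ReachIn (G : SubD n) (u v : Fin n) : Prop :=
  ∃ W, IsWalkIn G W ∧ W.head? = some u ∧ W.getLast? = some v

/-- `u` and `v` lie in the same strongly connected component of `G`. -/
def SccEq (G : SubD n) (u v : Fin n) : Prop := ReachIn G u v ∧ ReachIn G v u

/-- The node set of the s.c.c. of `u` in `G`. -/
def sccOf (G : SubD n) (u : Fin n) : Set (Fin n) := {v | SccEq G u v}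

/-- The s.c.c. of `u` in `G`, as a digraph. -/
def sccSub (G : SubD n) (u : Fin n) : SubD n :=
  ⟨sccOf G u, fun a b => G.edge a b ∧ a ∈ sccOf G u ∧ b ∈ sccOf G u⟩

/-- `H` is a subgraph of `G`. -/
def SubLE (H G : SubD n) : Prop := H.verts ⊆ G.verts ∧ ∀ u v, H.edge u v → G.edge u v

/-- `G` is completely reducible: there are no edges between distinct s.c.c.'s,
i.e. every edge lies inside an s.c.c. -/
def CompletelyReducible (G : SubD n) : Prop := ∀ u v, G.edge u v → ReachIn G v u

/-- `G` has no trivial s.c.c.: every node lies on a cycle of `G`. -/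
def NoTrivialScc (G : SubD n) : Prop := ∀ v ∈ G.verts, ∃ W, IsCycleIn G W ∧ v ∈ W

/-- `A` is irreducible: `𝒟(A)` is strongly connected. -/
def IrreducibleMat (A : MPMat n) : Prop := ∀ i j : Fin n, ReachIn (digr A) i j

/-- `W` is a closed walk at node `v` in `G`. -/
def IsClosedWalkAt (G : SubD n) (v : Fin n) (W : List (Fin n)) : Prop :=
  IsWalkIn G W ∧ W.head? = some v ∧ W.getLast? = some v

/-- The greatest common divisor of a set of naturals (0 for the empty set). -/
def setGcd (S : Set ℕ) : ℕ :=
  sInf {d | (∀ s ∈ S, d ∣ s) ∧ ∀ e, (∀ s ∈ S, e ∣ s) → e ∣ d}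

/-- The least common multiple of a set of naturals: the least positive common
multiple (0 if there is none). -/
def setLcm (S : Set ℕ) : ℕ := sInf {m | 0 < m ∧ ∀ s ∈ S, s ∣ m}

/-- The cyclicity of the s.c.c. of `v` in `G`: the gcd of the lengths of the
closed walks of `G` through `v` (0 if `v` lies on no nonempty closed walk). -/
def sccCyclicity (G : SubD n) (v : Fin n) : ℕ :=
  setGcd {l | 0 < l ∧ ∃ W, IsClosedWalkAt G v W ∧ elen W = l}

/-- The cyclicity of a digraph: the lcm of the cyclicities of its
(nontrivial) s.c.c.'s. -/
def graphCyclicity (G : SubD n) : ℕ :=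
  setLcm {c | ∃ v ∈ G.verts, c = sccCyclicity G v ∧ 0 < c}

/-- The walk `W` has mean weight `m`, i.e. `p(W) = l(W)·m` (finitely). -/
def meanIs (A : MPMat n) (W : List (Fin n)) (m : ℝ) : Prop :=
  walkWeight A W = (((elen W : ℝ) * m : ℝ) : WithBot ℝ)

/-- `lam` is the maximum cycle mean `λ(A)` of `A`: it is the mean of some
cycle of `𝒟(A)` and no cycle has a larger mean.  (Its existence is
equivalent to `𝒟(A)` containing a cycle, i.e. `λ(A) ≠ -∞`.) -/
def IsMaxCycleMean (A : MPMat n) (lam : ℝ) : Prop :=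
  (∃ W, IsCycleIn (digr A) W ∧ meanIs A W lam) ∧
  ∀ W m, IsCycleIn (digr A) W → meanIs A W m → m ≤ lam

/-- The set of critical nodes: nodes on some cycle of mean `λ(A)`. -/
def critNodes (A : MPMat n) (lam : ℝ) : Set (Fin n) :=
  {v | ∃ W, IsCycleIn (digr A) W ∧ meanIs A W lam ∧ v ∈ W}

/-- Critical edges: edges of some cycle of mean `λ(A)`. -/
def critEdges (A : MPMat n) (lam : ℝ) (u v : Fin n) : Prop :=
  ∃ W, IsCycleIn (digr A) W ∧ meanIs A W lam ∧ (u, v) ∈ W.zip W.tail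

/-- The critical graph `𝒞(A)`. -/
def critSub (A : MPMat n) (lam : ℝ) : SubD n := ⟨critNodes A lam, critEdges A lam⟩

/-- Add the real constant `c` to every entry. -/
def shiftMat (A : MPMat n) (c : ℝ) : MPMat n := fun i j => A i j + (c : WithBot ℝ)

/-- The max-plus Kleene star `X^* = I ⊕ X ⊕ X² ⊕ ⋯` (entrywise supremum). -/
def mpStar (X : MPMat n) : MPMat n := fun i j => ⨆ t : ℕ, mpPow X t i j

/-- The matrix `M = (((-λ)⊗A)^{γ(𝒢)})^*` used to define the CSR terms. -/
def csrM (A : MPMat n) (lam : ℝ) (G : SubD n) : MPMat n :=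
  mpStar (mpPow (shiftMat A (-lam)) (graphCyclicity G))

/-- The `C` term of the CSR expansion of `A` w.r.t. the subgraph `G`. -/
def csrC (A : MPMat n) (lam : ℝ) (G : SubD n) : MPMat n :=
  fun i j => if j ∈ G.verts then csrM A lam G i j else ⊥

/-- The `R` term of the CSR expansion of `A` w.r.t. the subgraph `G`. -/
def csrR (A : MPMat n) (lam : ℝ) (G : SubD n) : MPMat n :=
  fun i j => if i ∈ G.verts then csrM A lam G i j else ⊥

/-- The `S` term of the CSR expansion of `A` w.r.t. the subgraph `G`. -/
def csrS (A : MPMat n) (lam : ℝ) (G : SubD n) : MPMat n :=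
  fun i j => if G.edge i j then A i j + ((-lam : ℝ) : WithBot ℝ) else ⊥

/-- The matrix `C S^t R`. -/
def csr (A : MPMat n) (lam : ℝ) (G : SubD n) (t : ℕ) : MPMat n :=
  mpMul (mpMul (csrC A lam G) (mpPow (csrS A lam G) t)) (csrR A lam G)

/-- `G` is a representing subgraph of the critical graph `crit`: a completely
reducible subgraph (with no trivial s.c.c.) such that every s.c.c. of `crit`
contains exactly one s.c.c. of `G`. -/
structure IsRepresenting (crit G : SubD n) : Prop where
  le : SubLE G crit
  compRed : CompletelyReducible G
  noTriv : NoTrivialScc G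
  covers : ∀ u ∈ crit.verts, ∃ v ∈ G.verts, SccEq crit u v
  unique : ∀ v ∈ G.verts, ∀ w ∈ G.verts, SccEq crit v w → SccEq G v w

/-- `B` is subordinate to `A`: obtained from `A` by setting some entries to `-∞`. -/
def Subordinate (B A : MPMat n) : Prop := ∀ i j, B i j = A i j ∨ B i j = ⊥

/-- Set to `-∞` all entries in the rows and columns indexed by `S`. -/
def zeroRC (A : MPMat n) (S : Set (Fin n)) : MPMat n :=
  fun i j => if i ∈ S ∨ j ∈ S then ⊥ else A i j

/-- The Nachtigall scheme: zero out the rows and columns of critical nodes. -/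
def bN (A : MPMat n) (lam : ℝ) : MPMat n := zeroRC A (critNodes A lam)

/-- `V` is a max-balancing of `A`: `V = D⁻¹((-λ(A))⊗A)D` with all entries `≤ 0`,
entries `0` on critical edges, and every edge of `𝒟(V)` lies on a cycle all of
whose edges have weight at least that of the given edge (cycle cover). -/
def IsMaxBalancing (A : MPMat n) (lam : ℝ) (V : MPMat n) : Prop :=
  (∃ d : Fin n → ℝ, ∀ i j, V i j = A i j + ((d j - d i - lam : ℝ) : WithBot ℝ)) ∧
  (∀ i j, V i j ≤ (0 : WithBot ℝ)) ∧
  (∀ i j, critEdges A lam i j → V i j = (0 : WithBot ℝ)) ∧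
  (∀ i j, V i j ≠ ⊥ →
    ∃ W, IsCycleIn (digr V) W ∧ (i, j) ∈ W.zip W.tail ∧ ∀ p ∈ W.zip W.tail, V i j ≤ V p.1 p.2)

/-- The Hartmann-Arguelles threshold graph `Θ^{ha}(μ)`: induced by the edges
with `v_{ij} ≥ μ`; by convention `Θ^{ha}(-∞) = 𝒟(A)`. -/
def thrHA (A V : MPMat n) (μ : WithBot ℝ) : SubD n :=
  if μ = ⊥ then digr A
  else ⟨{u | ∃ w, μ ≤ V u w ∨ μ ≤ V w u}, fun u v => μ ≤ V u v⟩

/-- The cycle threshold graph `Θ^{ct}(μ)`: induced by all nodes and edges of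
cycles of mean weight `≥ μ`; by convention `Θ^{ct}(-∞) = 𝒟(A)`. -/
def thrCT (A : MPMat n) (μ : WithBot ℝ) : SubD n :=
  if μ = ⊥ then digr A
  else ⟨{v | ∃ W m, IsCycleIn (digr A) W ∧ meanIs A W m ∧ μ ≤ (m : WithBot ℝ) ∧ v ∈ W},
        fun u v => ∃ W m, IsCycleIn (digr A) W ∧ meanIs A W m ∧ μ ≤ (m : WithBot ℝ) ∧
          (u, v) ∈ W.zip W.tail⟩

/-- `Θ` has an s.c.c. containing no s.c.c. of `crit`. -/
def HasFreeScc (Θ crit : SubD n) : Prop :=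
  ∃ u ∈ Θ.verts, ¬ ∃ w ∈ crit.verts, sccOf crit w ⊆ sccOf Θ u

/-- `μ` is the greatest value `≤ λ(A)` satisfying `P` (or `-∞` if there is
no such value). -/
def IsThrMax (P : WithBot ℝ → Prop) (lam : ℝ) (μ : WithBot ℝ) : Prop :=
  (μ ≤ (lam : WithBot ℝ) ∧ P μ ∧ ∀ μ', μ' ≤ (lam : WithBot ℝ) → P μ' → μ' ≤ μ) ∨
  (μ = ⊥ ∧ ∀ μ', μ' ≤ (lam : WithBot ℝ) → ¬ P μ')

/-- `μ = μ^{ha}` for the max-balancing `V` of `A`. -/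
def IsMuHA (A : MPMat n) (lam : ℝ) (V : MPMat n) (μ : WithBot ℝ) : Prop :=
  IsThrMax (fun m => HasFreeScc (thrHA A V m) (critSub A lam)) lam μ

/-- `μ = μ^{ct}` for `A`. -/
def IsMuCT (A : MPMat n) (lam : ℝ) (μ : WithBot ℝ) : Prop :=
  IsThrMax (fun m => HasFreeScc (thrCT A m) (critSub A lam)) lam μ

/-- The union of the s.c.c.'s of `Θ` intersecting the node set `crit`. -/
def unionSccMeeting (Θ : SubD n) (crit : Set (Fin n)) : Set (Fin n) :=
  {v | v ∈ Θ.verts ∧ ∃ w ∈ crit, SccEq Θ v w}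

/-- The node set `𝒢^{ha}` of the Hartmann-Arguelles scheme. -/
def haNodes (A V : MPMat n) (lam : ℝ) (μ : WithBot ℝ) : Set (Fin n) :=
  unionSccMeeting (thrHA A V μ) (critNodes A lam)

/-- The matrix `B^{HA}` of the Hartmann-Arguelles scheme. -/
def bHA (A V : MPMat n) (lam : ℝ) (μ : WithBot ℝ) : MPMat n :=
  zeroRC A (haNodes A V lam μ)

/-- The node set `𝒢^{ct}` of the cycle threshold scheme. -/
def ctNodes (A : MPMat n) (lam : ℝ) (μ : WithBot ℝ) : Set (Fin n) :=
  unionSccMeeting (thrCT A μ) (critNodes A lam)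

/-- The matrix `B^{ct}` of the cycle threshold scheme. -/
def bCT (A : MPMat n) (lam : ℝ) (μ : WithBot ℝ) : MPMat n :=
  zeroRC A (ctNodes A lam μ)

/-- The graph `𝒢^{ct}`: the union of the s.c.c.'s of `Θ^{ct}(μ^{ct})`
intersecting `𝒞(A)`, as a digraph. -/
def ctSub (A : MPMat n) (lam : ℝ) (μ : WithBot ℝ) : SubD n :=
  ⟨ctNodes A lam μ,
   fun u v => (thrCT A μ).edge u v ∧ u ∈ ctNodes A lam μ ∧ v ∈ ctNodes A lam μ⟩

/-- The circumference of `G`: the greatest length of a cycle of `G`. -/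
def circumf (G : SubD n) : ℕ := sSup {l | ∃ W, IsCycleIn G W ∧ W.length = l + 1}

/-- The cab driver's diameter of `G`: the greatest length of a path of `G`. -/
def cabDiam (G : SubD n) : ℕ := sSup {l | ∃ W, IsPathIn G W ∧ W.length = l + 1}

/-- The girth of the s.c.c. of `v` in `G`: the least length of a cycle lying
in the s.c.c. of `v`. -/
def sccGirth (G : SubD n) (v : Fin n) : ℕ :=
  sInf {l | 0 < l ∧ ∃ W, IsCycleIn G W ∧ W.length = l + 1 ∧ ∀ u ∈ W, SccEq G v u}

/-- The max-girth of `G`: the greatest girth of an s.c.c. of `G`. -/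
def maxGirth (G : SubD n) : ℕ := sSup {g | ∃ v ∈ G.verts, 0 < g ∧ g = sccGirth G v}

/-- The max-cyclicity of `G`: the greatest cyclicity of an s.c.c. of `G`. -/
def maxCyclicity (G : SubD n) : ℕ := sSup {c | ∃ v ∈ G.verts, 0 < c ∧ c = sccCyclicity G v}

/-- The Wielandt number: `Wi(n) = (n-1)² + 1` for `n > 1`, `Wi(1) = 0`. -/
def wielandt (k : ℕ) : ℕ := if k ≤ 1 then 0 else (k - 1) ^ 2 + 1

/-- The set of finite entries of `A`. -/
def finEntries (A : MPMat n) : Set ℝ := {x | ∃ i j, A i j = (x : WithBot ℝ)}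

/-- The least finite entry of `A`. -/
def minEnt (A : MPMat n) : ℝ := sInf (finEntries A)

/-- The greatest finite entry of `A`. -/
def maxEnt (A : MPMat n) : ℝ := sSup (finEntries A)

/-- `‖A‖`: the difference between the greatest and least finite entries. -/
def matNorm (A : MPMat n) : ℝ := maxEnt A - minEnt A

/-- `n_B`: the size of the smallest square submatrix of `B` containing all
finite entries of `B`. -/
def nB (B : MPMat n) : ℕ := Set.ncard {i | ∃ j, B i j ≠ ⊥ ∨ B j i ≠ ⊥}

/-- `‖v‖`: the difference between the greatest and least entries of `v`. -/
def vecNorm (v : Fin n → ℝ) : ℝ := sSup (Set.range v) - sInf (Set.range v)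

/-- The exploration penalty `ep^γ(i)` (w.r.t. the graph `crit`): the least `T`
such that for every multiple `t` of `γ` with `t ≥ T` there is a closed walk of
length `t` at `i` in `crit`. -/
def epAt (crit : SubD n) (γ : ℕ) (i : Fin n) : ℕ :=
  sInf {T | ∀ t, γ ∣ t → T ≤ t → ∃ W, IsClosedWalkAt crit i W ∧ elen W = t}

/-- The exploration penalty `ep^γ(S)`: the maximum of `ep^γ(i)` over `i ∈ S`. -/
def epOn (crit : SubD n) (γ : ℕ) (S : Set (Fin n)) : ℕ := sSup {e | ∃ i ∈ S, e = epAt crit γ i}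

/-- `ep(𝒞(A))`: the maximum over the s.c.c.'s `𝒞_l` of `crit` of
`ep^{γ(𝒞_l)}(𝒞_l)`. -/
def epCrit (crit : SubD n) : ℕ :=
  sSup {e | ∃ i ∈ crit.verts, e = epAt crit (sccCyclicity crit i) i}

/-- The weak CSR expansion `A^t = λ^{⊗t}⊗(CS^tR) ⊕ B^t` holds at time `t`
(with CSR terms taken w.r.t. the subgraph `G`). -/
def weakCSReq (A B : MPMat n) (lam : ℝ) (G : SubD n) (t : ℕ) : Prop :=
  ∀ i j, mpPow A t i j = max (csr A lam G t i j + (((t : ℝ) * lam : ℝ) : WithBot ℝ)) (mpPow B t i j)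

/-- The domination `λ^{⊗t}⊗(CS^tR) ≥ B^t` holds at time `t`. -/
def T2eq (A B : MPMat n) (lam : ℝ) (G : SubD n) (t : ℕ) : Prop :=
  ∀ i j, mpPow B t i j ≤ csr A lam G t i j + (((t : ℝ) * lam : ℝ) : WithBot ℝ)

/-- The domination `λ^{⊗t}⊗(CS^tRv) ≥ B^t v` holds at time `t`. -/
def T2veq (A B : MPMat n) (lam : ℝ) (G : SubD n) (v : Fin n → ℝ) (t : ℕ) : Prop :=
  ∀ i, mpMulVec (mpPow B t) (fun j => (v j : WithBot ℝ)) i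
      ≤ mpMulVec (csr A lam G t) (fun j => (v j : WithBot ℝ)) i + (((t : ℝ) * lam : ℝ) : WithBot ℝ)

/-- One step of removing a (nonempty) closed subwalk from a walk. -/
def RemoveStep (W V : List (Fin n)) : Prop :=
  ∃ (pre mid post : List (Fin n)) (x : Fin n),
    W = pre ++ x :: mid ++ x :: post ∧ V = pre ++ x :: post

/-- One step of inserting a cycle of `C` into a walk (at an occurrence of a
node of that cycle). -/
def InsertStep (C : SubD n) (W V : List (Fin n)) : Prop :=
  ∃ (pre post mid : List (Fin n)) (x : Fin n),
    W = pre ++ x :: post ∧ V = pre ++ x :: mid ++ x :: post ∧ IsCycleIn C (x :: mid ++ [x])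

/-- `V` is obtained from `W` by removing cycles. -/
def RemOnly : List (Fin n) → List (Fin n) → Prop := Relation.ReflTransGen RemoveStep

/-- `V` is obtained from `W` by removing cycles and possibly inserting cycles
of `C`. -/
def RemIns (C : SubD n) : List (Fin n) → List (Fin n) → Prop :=
  Relation.ReflTransGen fun W V => RemoveStep W V ∨ InsertStep C W V

/-- `V` is obtained from `W` by removing at least one cycle and possibly
inserting cycles of `C`. -/
def RemInsStrict (C : SubD n) (W V : List (Fin n)) : Prop :=
  ∃ W₁ W₂, RemIns C W W₁ ∧ RemoveStep W₁ W₂ ∧ RemIns C W₂ V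

/-- `T` witnesses the cycle removal threshold `T_cr^γ(C) ≤ T` in the digraph
`G`: every walk of `G` through `C` of length `≥ T` can be reduced (removing
cycles, possibly inserting cycles of `C`) to a walk through `C` with the same
endpoints, the same length mod `γ`, and length `≤ T`. -/
def TcrProp (G C : SubD n) (γ T : ℕ) : Prop :=
  ∀ W, IsWalkIn G W → (∃ v ∈ C.verts, v ∈ W) → T ≤ elen W →
    ∃ V, RemIns C W V ∧ IsWalkIn G V ∧ (∃ v ∈ C.verts, v ∈ V) ∧
      V.head? = W.head? ∧ V.getLast? = W.getLast? ∧ elen V ≡ elen W [MOD γ] ∧ elen V ≤ T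

/-- `T` witnesses the strict cycle removal threshold `T̃_cr^γ(C) ≤ T`. -/
def TcrStrictProp (G C : SubD n) (γ T : ℕ) : Prop :=
  ∀ W, IsWalkIn G W → (∃ v ∈ C.verts, v ∈ W) → T ≤ elen W →
    ∃ V, RemInsStrict C W V ∧ IsWalkIn G V ∧ (∃ v ∈ C.verts, v ∈ V) ∧
      V.head? = W.head? ∧ V.getLast? = W.getLast? ∧ elen V ≡ elen W [MOD γ] ∧ elen V ≤ T

/-- The cycle removal threshold `T_cr^γ(C)` of the subgraph `C` in `G`. -/
def Tcr (G C : SubD n) (γ : ℕ) : ℕ := sInf {T | TcrProp G C γ T}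

/-- The strict cycle removal threshold `T̃_cr^γ(C)` of the subgraph `C` in `G`. -/
def TcrStrict (G C : SubD n) (γ : ℕ) : ℕ := sInf {T | TcrStrictProp G C γ T}

/-- The subgraph formed by the nodes and edges of the walk `W`. -/
def cycleSub (W : List (Fin n)) : SubD n :=
  ⟨{v | v ∈ W}, fun a b => (a, b) ∈ W.zip W.tail⟩

/-- The single-node subgraph `{i}` (with no edges). -/
def singleSub (i : Fin n) : SubD n := ⟨{i}, fun _ _ => False⟩

/-- `λ(M)` as an element of `ℝmax` (`-∞` if `𝒟(M)` has no cycle). -/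
def lamW (M : MPMat n) : WithBot ℝ :=
  sSup {x : WithBot ℝ | ∃ W m, IsCycleIn (digr M) W ∧ meanIs M W m ∧ x = (m : WithBot ℝ)}

end MaxPlus

/-!
Split a long walk `W` through `𝒢` as `W = P g S`, where `g` is its first node in `𝒢`, so that `P`
avoids `𝒢`. Any `n - n₁ + 1` consecutive nodes of `P`, and any `n + 1` consecutive nodes of `g S`,
contain a repeated node; cutting out such closed subwalks greedily yields `k_P` disjoint cycles in
`P` and `k_S` in `g S` with `|P| ≤ (k_P + 1)(n - n₁)` and `|g S| ≤ (k_S + 1) n`. Hence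
`l(W) ≥ γ n + n - n₁` forces `k_P + k_S ≥ γ`. Among `γ` numbers, two prefix sums agree mod `γ`,
so some nonempty subfamily of these cycles has total length divisible by `γ`; removing it
shortens `W`, keeps its length mod `γ` and keeps `g`. Iterating gives the bound.
-/

open scoped List

theorem List.exists_eq_append_cons_append_cons_of_not_nodup {α : Type*} {l : List α}
    (h : ¬l.Nodup) : ∃ pre x mid post, l = pre ++ x :: mid ++ x :: post := by
  obtain ⟨x, hx⟩ : ∃ x, [x, x] <+ l := by simpa [List.nodup_iff_sublist] using h
  obtain ⟨r₁, r₂, rfl, h₁, h₂⟩ := List.cons_sublist_iff.1 hx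
  obtain ⟨pre, mid, rfl⟩ := List.append_of_mem h₁
  obtain ⟨mid', post, rfl⟩ := List.append_of_mem (List.singleton_sublist.1 h₂)
  exact ⟨pre, x, mid ++ mid', post, by simp⟩

theorem List.exists_eq_append_cons_append_cons_of_ncard_lt {α : Type*} {U : Set α}
    (hU : U.Finite) {l : List α} (hl : ∀ v ∈ l, v ∈ U) (hlen : U.ncard < l.length) :
    ∃ pre x mid post, l = pre ++ x :: mid ++ x :: post ∧ pre.length + mid.length < U.ncard := by
  set k := U.ncard + 1
  have hdup : ¬(l.take k).Nodup := fun hnd => by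
    have : (l.take k).length ≤ U.ncard := by
      rw [← List.toFinset_card_of_nodup hnd, ← Set.ncard_coe_finset]
      exact Set.ncard_le_ncard (fun v hv => hl v (List.mem_of_mem_take (by simpa using hv))) hU
    simp only [List.length_take] at this
    omega
  obtain ⟨pre, x, mid, post, hdec⟩ := List.exists_eq_append_cons_append_cons_of_not_nodup hdup
  refine ⟨pre, x, mid, post ++ l.drop k, ?_, ?_⟩
  · conv_lhs => rw [← l.take_append_drop k, hdec]
    simp
  · have := congrArg List.length hdec
    simp only [List.length_take, List.length_append, List.length_cons] at this
    omega

theorem List.exists_eq_append_cons_of_exists_mem {α : Type*} {s : Set α} {l : List α}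
    (h : ∃ v ∈ s, v ∈ l) : ∃ pre g post, l = pre ++ g :: post ∧ g ∈ s ∧ ∀ v ∈ pre, v ∉ s := by
  obtain ⟨v, hvs, hvl⟩ := h
  obtain ⟨g, hfind⟩ := Option.isSome_iff_exists.1
    (List.find?_isSome (p := fun v => decide (v ∈ s)) |>.2 ⟨v, hvl, by simpa using hvs⟩)
  obtain ⟨hg, pre, post, rfl, hpre⟩ := List.find?_eq_some_iff_append.1 hfind
  exact ⟨pre, g, post, rfl, by simpa using hg, by simpa using hpre⟩

theorem List.exists_sublist_ne_nil_dvd_sum {γ : ℕ} (hγ : 0 < γ) {cs : List ℕ}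
    (hlen : γ ≤ cs.length) : ∃ ds, ds <+ cs ∧ ds ≠ [] ∧ γ ∣ ds.sum := by
  obtain ⟨a, ha, b, hb, hab, heq⟩ := Finset.exists_ne_map_eq_of_card_lt_of_maps_to
    (s := Finset.range (γ + 1)) (t := Finset.range γ) (f := fun i => (cs.take i).sum % γ)
    (by simp) (fun i _ => by simpa using Nat.mod_lt _ hγ)
  wlog hlt : a < b generalizing a b
  · exact this b hb a ha hab.symm heq.symm (by omega)
  simp only [Finset.mem_range] at hb
  refine ⟨(cs.take b).drop a, (List.drop_sublist _ _).trans (List.take_sublist _ _), ?_, ?_⟩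
  · simp only [ne_eq, List.drop_eq_nil_iff, List.length_take]
    omega
  · have hsum := congrArg List.sum (List.take_append_drop a (cs.take b))
    rw [List.sum_append, List.take_take, min_eq_left hlt.le] at hsum
    have := (Nat.modEq_iff_dvd' (hsum ▸ Nat.le_add_right _ _)).1 heq
    rwa [← hsum, Nat.add_sub_cancel_left] at this

namespace MaxPlus

section

variable {n : ℕ} {W V : List (Fin n)}

lemma RemoveStep.sublist (h : RemoveStep W V) : V <+ W := by
  obtain ⟨pre, mid, post, x, rfl, rfl⟩ := h
  exact (List.sublist_append_left pre (x :: mid)).append_right (x :: post)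

lemma RemoveStep.head?_eq (h : RemoveStep W V) : V.head? = W.head? := by
  obtain ⟨pre, mid, post, x, rfl, rfl⟩ := h
  cases pre <;> simp

lemma RemoveStep.getLast?_eq (h : RemoveStep W V) : V.getLast? = W.getLast? := by
  obtain ⟨pre, mid, post, x, rfl, rfl⟩ := h
  simp [List.getLast?_append, List.getLast?_cons]

lemma RemoveStep.isChain {e : Fin n → Fin n → Prop} (h : RemoveStep W V) (hW : W.IsChain e) :
    V.IsChain e := by
  obtain ⟨pre, mid, post, x, rfl, rfl⟩ := h
  exact List.isChain_split.2
    ⟨hW.infix ⟨[], mid ++ x :: post, by simp⟩, hW.infix ⟨pre ++ x :: mid, [], by simp⟩⟩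

lemma RemoveStep.isWalkIn {G : SubD n} (h : RemoveStep W V) (hW : IsWalkIn G W) :
    IsWalkIn G V := by
  refine ⟨?_, fun v hv => hW.2.1 v (h.sublist.subset hv), h.isChain hW.2.2⟩
  obtain ⟨pre, mid, post, x, rfl, rfl⟩ := h
  simp

lemma RemoveStep.append_left (Z : List (Fin n)) (h : RemoveStep W V) :
    RemoveStep (Z ++ W) (Z ++ V) := by
  obtain ⟨pre, mid, post, x, rfl, rfl⟩ := h
  exact ⟨Z ++ pre, mid, post, x, by simp, by simp⟩

lemma RemoveStep.append_right (Z : List (Fin n)) (h : RemoveStep W V) :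
    RemoveStep (W ++ Z) (V ++ Z) := by
  obtain ⟨pre, mid, post, x, rfl, rfl⟩ := h
  exact ⟨pre, mid, post ++ Z, x, by simp, by simp⟩

lemma RemOnly.head?_eq (h : RemOnly W V) : V.head? = W.head? := by
  induction h with
  | refl => rfl
  | tail _ hstep ih => exact hstep.head?_eq.trans ih

lemma RemOnly.getLast?_eq (h : RemOnly W V) : V.getLast? = W.getLast? := by
  induction h with
  | refl => rfl
  | tail _ hstep ih => exact hstep.getLast?_eq.trans ih

lemma RemOnly.isWalkIn {G : SubD n} (h : RemOnly W V) (hW : IsWalkIn G W) : IsWalkIn G V := by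
  induction h with
  | refl => exact hW
  | tail _ hstep ih => exact hstep.isWalkIn ih

lemma RemOnly.append_left (Z : List (Fin n)) (h : RemOnly W V) : RemOnly (Z ++ W) (Z ++ V) :=
  Relation.ReflTransGen.lift (Z ++ ·) (fun _ _ hstep => RemoveStep.append_left Z hstep) _ _ h

lemma RemOnly.append_right (Z : List (Fin n)) (h : RemOnly W V) : RemOnly (W ++ Z) (V ++ Z) :=
  Relation.ReflTransGen.lift (· ++ Z) (fun _ _ hstep => RemoveStep.append_right Z hstep) _ _ h

lemma RemOnly.remIns (C : SubD n) (h : RemOnly W V) : RemIns C W V :=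
  Relation.ReflTransGen.mono (fun _ _ => Or.inl) _ _ h

/-- `cs` lists the lengths of disjoint closed subwalks of `X`. -/
def RemovableLengths (X : List (Fin n)) (cs : List ℕ) : Prop :=
  (∀ c ∈ cs, 0 < c) ∧ ∀ ds, ds <+ cs → ∃ V, RemOnly X V ∧ V.length + ds.sum = X.length

lemma removableLengths_nil (X : List (Fin n)) : RemovableLengths X [] :=
  ⟨by simp, fun ds hds => ⟨X, .refl, by simp [List.sublist_nil.1 hds]⟩⟩

lemma RemovableLengths.cons {x : Fin n} {post : List (Fin n)} {cs : List ℕ}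
    (h : RemovableLengths (x :: post) cs) (pre mid : List (Fin n)) :
    RemovableLengths (pre ++ x :: mid ++ x :: post) ((mid.length + 1) :: cs) := by
  refine ⟨by simpa using h.1, fun ds hds => ?_⟩
  rcases List.sublist_cons_iff.1 hds with hds | ⟨ds', rfl, hds'⟩
  · obtain ⟨V, hV, hlen⟩ := h.2 ds hds
    refine ⟨pre ++ x :: mid ++ V, hV.append_left _, ?_⟩
    simp only [List.length_append, List.length_cons] at hlen ⊢
    omega
  · obtain ⟨V, hV, hlen⟩ := h.2 ds' hds'
    refine ⟨pre ++ V, .head ⟨pre, mid, post, x, rfl, rfl⟩ (hV.append_left pre), ?_⟩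
    simp only [List.length_append, List.length_cons, List.sum_cons] at hlen ⊢
    omega

lemma exists_removableLengths (U : Set (Fin n)) (X : List (Fin n)) (hX : ∀ v ∈ X, v ∈ U) :
    ∃ cs, RemovableLengths X cs ∧ X.length ≤ (cs.length + 1) * U.ncard := by
  by_cases hshort : X.length ≤ U.ncard
  · exact ⟨[], removableLengths_nil X, by simpa using hshort⟩
  obtain ⟨pre, x, mid, post, hXeq, hbound⟩ :=
    List.exists_eq_append_cons_append_cons_of_ncard_lt U.toFinite hX (not_le.1 hshort)
  have hXlen : X.length = pre.length + mid.length + post.length + 2 := by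
    simp only [hXeq, List.length_append, List.length_cons]
    omega
  obtain ⟨cs, hcs, hlen⟩ := exists_removableLengths U (x :: post) fun v hv =>
    hX v (hXeq ▸ List.mem_append_right (pre ++ x :: mid) hv)
  refine ⟨_, hXeq ▸ hcs.cons pre mid, ?_⟩
  simp only [List.length_cons, add_mul, one_mul] at hlen ⊢
  omega
termination_by X.length
decreasing_by simp only [List.length_cons]; omega

lemma exists_remOnly_shorter {C : Set (Fin n)} {γ : ℕ} (hγ : 0 < γ) (hWC : ∃ v ∈ C, v ∈ W)
    (hlen : γ * n + (n - C.ncard) ≤ elen W) :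
    ∃ V, RemOnly W V ∧ (∃ v ∈ C, v ∈ V) ∧ elen V < elen W ∧ elen V ≡ elen W [MOD γ] := by
  obtain ⟨P, g, S, rfl, hg, hP⟩ := List.exists_eq_append_cons_of_exists_mem hWC
  obtain ⟨csP, hcsP, hPlen⟩ := exists_removableLengths Cᶜ P hP
  obtain ⟨csS, hcsS, hSlen⟩ := exists_removableLengths Set.univ (g :: S) (by simp)
  have hcount : γ ≤ (csP ++ csS).length := by
    rw [Set.ncard_compl] at hPlen
    simp only [elen, List.length_append, List.length_cons, Set.ncard_univ, Nat.card_eq_fintype_card,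
      Fintype.card_fin] at hlen hPlen hSlen ⊢
    have hmn : n - C.ncard ≤ n := Nat.sub_le _ _
    generalize n - C.ncard = m at hlen hPlen hmn
    have hlen' : γ * n + m ≤ P.length + S.length := by omega
    by_contra! hlt
    nlinarith [Nat.mul_le_mul_left csP.length hmn, Nat.mul_le_mul_right n hlt]
  obtain ⟨ds, hds, hne, hdvd⟩ := List.exists_sublist_ne_nil_dvd_sum hγ hcount
  obtain ⟨dP, dS, rfl, hdP, hdS⟩ := List.sublist_append_iff.1 hds
  obtain ⟨VP, hVP, hVPlen⟩ := hcsP.2 dP hdP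
  obtain ⟨VS, hVS, hVSlen⟩ := hcsS.2 dS hdS
  have hpos : 0 < (dP ++ dS).sum := by
    obtain ⟨d, hd⟩ := List.exists_mem_of_ne_nil _ hne
    refine List.sum_pos_iff_exists_pos_nat.2 ⟨d, hd, ?_⟩
    rcases List.mem_append.1 hd with hd | hd
    exacts [hcsP.1 d (hdP.subset hd), hcsS.1 d (hdS.subset hd)]
  have hgVS : g ∈ VS := List.mem_of_mem_head? (hVS.head?_eq ▸ rfl)
  have hlenV : elen (VP ++ VS) + (dP ++ dS).sum = elen (P ++ g :: S) := by
    simp only [elen, List.sum_append, List.length_append, List.length_cons] at hVPlen hVSlen ⊢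
    have := List.length_pos_of_mem hgVS
    omega
  refine ⟨VP ++ VS, (hVP.append_right _).trans (hVS.append_left _),
    ⟨g, hg, List.mem_append_right _ hgVS⟩, by omega, ?_⟩
  exact (Nat.modEq_iff_dvd' (by omega)).2 (by rwa [← hlenV, Nat.add_sub_cancel_left])

lemma exists_remOnly_elen_le {C : Set (Fin n)} {γ : ℕ} (hγ : 0 < γ) (W : List (Fin n))
    (hWC : ∃ v ∈ C, v ∈ W) :
    ∃ V, RemOnly W V ∧ (∃ v ∈ C, v ∈ V) ∧ elen V ≡ elen W [MOD γ] ∧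
      elen V ≤ γ * n + n - C.ncard - 1 := by
  by_cases hshort : elen W ≤ γ * n + n - C.ncard - 1
  · exact ⟨W, .refl, hWC, rfl, hshort⟩
  have hCn : C.ncard ≤ n := by simpa using C.ncard_le_card
  obtain ⟨V₁, hWV₁, hV₁C, hlt, hmod₁⟩ := exists_remOnly_shorter hγ hWC (by omega)
  obtain ⟨V, hV₁V, hVC, hmod, hle⟩ := exists_remOnly_elen_le hγ V₁ hV₁C
  exact ⟨V, hWV₁.trans hV₁V, hVC, hmod.trans hmod₁, hle⟩
termination_by elen W

end

theorem cycle_removal_arithmetic_general {n : ℕ} (G : SubD n) (C : SubD n)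
    (γ : ℕ) (hγ : 1 ≤ γ) :
    TcrProp G C γ (γ * n + n - C.verts.ncard - 1)
    ∧ ∀ W, IsWalkIn G W → (∃ v ∈ C.verts, v ∈ W) →
        ∃ V, RemOnly W V ∧ IsWalkIn G V ∧ (∃ v ∈ C.verts, v ∈ V) ∧
          V.head? = W.head? ∧ V.getLast? = W.getLast? ∧
          elen V ≡ elen W [MOD γ] ∧ elen V ≤ γ * n + n - C.verts.ncard - 1 := by
  refine ⟨fun W hW hWC _ => ?_, fun W hW hWC => ?_⟩
  all_goals obtain ⟨V, hWV, hVC, hmod, hle⟩ := exists_remOnly_elen_le hγ W hWC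
  exacts [⟨V, hWV.remIns C, hWV.isWalkIn hW, hVC, hWV.head?_eq, hWV.getLast?_eq, hmod, hle⟩,
    ⟨V, hWV, hWV.isWalkIn hW, hVC, hWV.head?_eq, hWV.getLast?_eq, hmod, hle⟩]

/-- For a subgraph `C` of `G` on `n₁` nodes and any `γ ≥ 1`,
`T_cr^γ(C) ≤ γ·n + n − n₁ − 1`; concretely, every walk through `C` can be
reduced, by removing cycles only, to a walk through `C` with the same endpoints
and the same length mod `γ`, of length at most `γ·n + n − n₁ − 1`. -/
theorem cycle_removal_arithmetic {n : ℕ} (G : SubD n) (C : SubD n) (hC : SubLE C G)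
    (γ : ℕ) (hγ : 1 ≤ γ) :
    TcrProp G C γ (γ * n + n - C.verts.ncard - 1)
    ∧ ∀ W, IsWalkIn G W → (∃ v ∈ C.verts, v ∈ W) →
        ∃ V, RemOnly W V ∧ IsWalkIn G V ∧ (∃ v ∈ C.verts, v ∈ V) ∧
          V.head? = W.head? ∧ V.getLast? = W.getLast? ∧
          elen V ≡ elen W [MOD γ] ∧ elen V ≤ γ * n + n - C.verts.ncard - 1 :=
  cycle_removal_arithmetic_general G C γ hγ

end MaxPlus
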